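/- Let g = h ⊕ (p∧E) ⊆ so(V) where h ⊆ so(E) is an irreducible subalgebra, in the standard Lorentzian setup. Then the subspace of ∇R(g) = {S : V → R(g) linear | S_u(v,w) + S_v(w,u) + S_w(u,v) = 0 for all u,v,w ∈ V} consisting of tensors annihilated by g (under the natural action on V* ⊗ Λ²V* ⊗ g) is one-dimensional, spanned by S = q' ⊗ R^{Id_E}, where q' = g(p, ·). -/

import Mathlib

attribute [local instance 100] LieRing.ofAssociativeRing

/-- The bivector `x ∧ y` regarded as an endomorphism of `V`:
`(x ∧ y) z = g(x,z) y − g(y,z) x`. -/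
def wedge {V : Type*} [AddCommGroup V] [Module ℝ V]
    (g : LinearMap.BilinForm ℝ V) (x y : V) : Module.End ℝ V :=
  (g x).smulRight y - (g y).smulRight x

/-- The subspace `E = (span{p,q})^⊥ = ker g(p,·) ∩ ker g(q,·)`. -/
def Esub {V : Type*} [AddCommGroup V] [Module ℝ V]
    (g : LinearMap.BilinForm ℝ V) (p q : V) : Submodule ℝ V :=
  LinearMap.ker (g p) ⊓ LinearMap.ker (g q)

/-- Membership in `𝔤 = 𝔥 ⊕ (p∧E)`. -/
def InGAlg {V : Type*} [AddCommGroup V] [Module ℝ V]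
    (g : LinearMap.BilinForm ℝ V) (p q : V)
    (𝔥 : LieSubalgebra ℝ (Module.End ℝ V)) (A : Module.End ℝ V) : Prop :=
  ∃ B ∈ 𝔥, ∃ e ∈ Esub g p q, A = B + wedge g p e

/-- `S : V → R(𝔤)` belongs to `∇R(𝔤)`: `S` is linear, each `S_u` is an algebraic
curvature tensor with values in `𝔤 = 𝔥 ⊕ (p∧E)` (bilinear, alternating, first
Bianchi identity), and `S` satisfies the second Bianchi identity. -/
def MemNablaR {V : Type*} [AddCommGroup V] [Module ℝ V]
    (g : LinearMap.BilinForm ℝ V) (p q : V)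
    (𝔥 : LieSubalgebra ℝ (Module.End ℝ V))
    (S : V → V → V → Module.End ℝ V) : Prop :=
  (∀ (c : ℝ) (u u' v w : V), S (c • u + u') v w = c • S u v w + S u' v w) ∧
  (∀ (c : ℝ) (u v v' w : V), S u (c • v + v') w = c • S u v w + S u v' w) ∧
  (∀ (c : ℝ) (u v w w' : V), S u v (c • w + w') = c • S u v w + S u v w') ∧
  (∀ u v : V, S u v v = 0) ∧
  (∀ u v w : V, InGAlg g p q 𝔥 (S u v w)) ∧
  (∀ u v w x : V, (S u v w) x + (S u w x) v + (S u x v) w = 0) ∧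
  (∀ u v w : V, S u v w + S v w u + S w u v = 0)

/-- `S` is annihilated by `𝔤` under the natural action on `V* ⊗ Λ²V* ⊗ 𝔤`. -/
def Annihilated {V : Type*} [AddCommGroup V] [Module ℝ V]
    (g : LinearMap.BilinForm ℝ V) (p q : V)
    (𝔥 : LieSubalgebra ℝ (Module.End ℝ V))
    (S : V → V → V → Module.End ℝ V) : Prop :=
  ∀ A : Module.End ℝ V, InGAlg g p q 𝔥 A →
    ∀ v₁ v₂ v₃ : V,
      ⁅A, S v₃ v₁ v₂⁆ - S (A v₃) v₁ v₂ - S v₃ (A v₁) v₂ - S v₃ v₁ (A v₂) = 0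

/-- The tensor `S = q' ⊗ R^{Id_E}`, where `q' = g(p,·)` and
`R^{Id_E}(v,w) = p ∧ ((v∧w)p)`. -/
def Szero {V : Type*} [AddCommGroup V] [Module ℝ V]
    (g : LinearMap.BilinForm ℝ V) (p : V) : V → V → V → Module.End ℝ V :=
  fun u v w => (g p u) • wedge g p ((wedge g v w) p)

section aux
variable {V : Type*} [AddCommGroup V] [Module ℝ V] (g : LinearMap.BilinForm ℝ V)

theorem wedge_apply (x y z : V) : wedge g x y z = g x z • y - g y z • x := by
  simp [wedge]

theorem wedge_self (x : V) : wedge g x x = 0 := by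
  ext z; simp [wedge_apply]

theorem wedge_zero_right (x : V) : wedge g x 0 = 0 := by
  ext z; simp [wedge_apply]

theorem wedge_zero_left (x : V) : wedge g 0 x = 0 := by
  ext z; simp [wedge_apply]

theorem wedge_add_right (x y y' : V) :
    wedge g x (y + y') = wedge g x y + wedge g x y' := by
  ext z; simp [wedge_apply]; module

theorem wedge_smul_right (c : ℝ) (x y : V) :
    wedge g x (c • y) = c • wedge g x y := by
  ext z; simp [wedge_apply]; module

theorem wedge_sub_right (x y y' : V) :
    wedge g x (y - y') = wedge g x y - wedge g x y' := by
  ext z; simp [wedge_apply]; module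

theorem wedge_neg_right (x y : V) : wedge g x (-y) = - wedge g x y := by
  ext z; simp [wedge_apply]; module

theorem wedge_add_left (x x' y : V) :
    wedge g (x + x') y = wedge g x y + wedge g x' y := by
  ext z; simp [wedge_apply, map_add, LinearMap.add_apply]; module

theorem wedge_smul_left (c : ℝ) (x y : V) :
    wedge g (c • x) y = c • wedge g x y := by
  ext z; simp [wedge_apply, map_smul, LinearMap.smul_apply, smul_eq_mul]; module

theorem end_lie_apply (A X : Module.End ℝ V) (z : V) :
    ⁅A, X⁆ z = A (X z) - X (A z) := by
  rw [Ring.lie_def]; simp [Module.End.mul_apply]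

theorem wedge_skew (hsymm : ∀ x y : V, g x y = g y x) (a b x y : V) :
    g (wedge g a b x) y = - g x (wedge g a b y) := by
  simp only [wedge_apply, map_sub, map_smul, LinearMap.sub_apply, LinearMap.smul_apply,
    smul_eq_mul]
  rw [hsymm x a, hsymm x b]; ring

theorem lie_wedge (hsymm : ∀ x y : V, g x y = g y x) (A : Module.End ℝ V)
    (hA : ∀ x y, g (A x) y = - g x (A y)) (x y : V) :
    ⁅A, wedge g x y⁆ = wedge g (A x) y + wedge g x (A y) := by
  ext z
  rw [end_lie_apply]
  simp only [wedge_apply, map_sub, map_smul, LinearMap.add_apply]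
  rw [hA x z, hA y z]
  module

/-- linearity helper -/
theorem lin_helper {M : Type*} [AddCommGroup M] [Module ℝ M] (T : V → M)
    (h : ∀ (c : ℝ) (u u' : V), T (c • u + u') = c • T u + T u') :
    T 0 = 0 ∧ (∀ u u', T (u + u') = T u + T u') ∧ (∀ (c : ℝ) u, T (c • u) = c • T u) := by
  have h0 : T 0 = 0 := by
    have := h 1 0 0
    simp only [one_smul, add_zero, zero_add] at this
    exact left_eq_add.mp this
  refine ⟨h0, fun u u' => by simpa using h 1 u u', fun c u => by simpa [h0] using h c u 0⟩

end aux

theorem exists_sym_eigenvector {E : Type*} [AddCommGroup E] [Module ℝ E]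
    [FiniteDimensional ℝ E] [Nontrivial E]
    (b : LinearMap.BilinForm ℝ E) (hsym : ∀ x y, b x y = b y x)
    (hpos : ∀ x : E, x ≠ 0 → 0 < b x x)
    (φ : E →ₗ[ℝ] E) (hφ : ∀ x y, b (φ x) y = b x (φ y)) :
    ∃ (μ : ℝ) (x : E), x ≠ 0 ∧ φ x = μ • x := by
  letI core : InnerProductSpace.Core ℝ E :=
    { inner := fun x y => b x y
      conj_inner_symm := fun x y => by simpa using hsym y x
      re_inner_nonneg := fun x => by
        rcases eq_or_ne x 0 with h | h
        · simp [h]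
        · simpa using (hpos x h).le
      add_left := fun x y z => by simp [map_add, LinearMap.add_apply]
      smul_left := fun x y r => by simp [map_smul, LinearMap.smul_apply, smul_eq_mul]
      definite := fun x hx => by
        by_contra h
        exact absurd hx (ne_of_gt (hpos x h)) }
  letI : NormedAddCommGroup E := core.toNormedAddCommGroup
  letI : InnerProductSpace ℝ E := InnerProductSpace.ofCore core.toCore
  have hsymφ : φ.IsSymmetric := fun x y => hφ x y
  obtain ⟨μ, hμ⟩ : ∃ μ : ℝ, Module.End.HasEigenvalue φ μ :=
    ⟨_, hsymφ.hasEigenvalue_iSup_of_finiteDimensional⟩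
  obtain ⟨x, hx⟩ := hμ.exists_hasEigenvector
  exact ⟨μ, x, hx.2, hx.apply_eq_smul⟩

theorem stmt9_part1 {V : Type*} [AddCommGroup V] [Module ℝ V]
    (g : LinearMap.BilinForm ℝ V) (hsymm : ∀ x y : V, g x y = g y x)
    (p q : V) (hp : g p p = 0) (hpq : g p q = 1)
    (hdecomp : ∀ u : V, ∃ α β : ℝ, ∃ e ∈ Esub g p q, u = α • p + e + β • q)
    (𝔥 : LieSubalgebra ℝ (Module.End ℝ V))
    (hskew : ∀ B ∈ 𝔥, ∀ x y : V, g (B x) y = - g x (B y))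
    (hBp : ∀ B ∈ 𝔥, B p = 0) (hBq : ∀ B ∈ 𝔥, B q = 0) :
    MemNablaR g p q 𝔥 (Szero g p) ∧ Annihilated g p q 𝔥 (Szero g p) := by
  constructor
  · refine ⟨?_, ?_, ?_, ?_, ?_, ?_, ?_⟩
    · intro c u u' v w
      simp only [Szero, map_add, map_smul, smul_eq_mul]
      module
    · intro c u v v' w
      simp only [Szero, wedge_add_left, wedge_smul_left, LinearMap.add_apply,
        LinearMap.smul_apply, wedge_add_right, wedge_smul_right]
      module
    · intro c u v w w'
      simp only [Szero, wedge_add_right, wedge_smul_right, LinearMap.add_apply,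
        LinearMap.smul_apply]
      module
    · intro u v
      simp [Szero, wedge_self, wedge_zero_right]
    · intro u v w
      obtain ⟨α, β, e, he, hm⟩ := hdecomp ((wedge g v w) p)
      have hgpm : g p ((wedge g v w) p) = 0 := by
        simp only [wedge_apply, map_sub, map_smul, smul_eq_mul]
        rw [hsymm v p, hsymm w p]; ring
      have hgpe : g p e = 0 := LinearMap.mem_ker.mp he.1
      have hβ : β = 0 := by
        rw [hm] at hgpm
        simp only [map_add, map_smul, smul_eq_mul, hp, hpq, hgpe] at hgpm
        linarith
      have hW : wedge g p ((wedge g v w) p) = wedge g p e := by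
        rw [hm, hβ]
        rw [wedge_add_right, wedge_add_right, wedge_smul_right, wedge_self,
          wedge_smul_right]
        simp
      refine ⟨0, 𝔥.zero_mem, (g p u) • e, Submodule.smul_mem _ _ he, ?_⟩
      rw [zero_add, Szero, hW, wedge_smul_right]
    · intro u v w x
      simp only [Szero, LinearMap.smul_apply, wedge_apply, map_sub, map_smul,
        LinearMap.sub_apply, LinearMap.smul_apply, smul_eq_mul]
      rw [hsymm v p, hsymm w p, hsymm x p, hsymm w v, hsymm x v, hsymm x w]
      module
    · intro u v w
      simp only [Szero, wedge_apply, wedge_sub_right, wedge_smul_right]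
      rw [hsymm v p, hsymm w p, hsymm u p]
      module
  · intro A hA v₁ v₂ v₃
    obtain ⟨B, hB, e, he, rfl⟩ := hA
    set A := B + wedge g p e with hAdef
    have hgpe : g p e = 0 := LinearMap.mem_ker.mp he.1
    have hep : g e p = 0 := by rw [hsymm]; exact hgpe
    have hAp : A p = 0 := by
      simp [hAdef, LinearMap.add_apply, hBp B hB, wedge_apply, hp, hep]
    have hAskew : ∀ x y, g (A x) y = - g x (A y) := by
      intro x y
      simp only [hAdef, LinearMap.add_apply, map_add]
      rw [hskew B hB x y, wedge_skew g hsymm p e x y]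
      ring
    have h1 : g p (A v₃) = 0 := by
      have := hAskew p v₃
      rw [hAp] at this
      simp at this
      linarith [this]
    have hm : A ((wedge g v₁ v₂) p)
        = (wedge g (A v₁) v₂) p + (wedge g v₁ (A v₂)) p := by
      have e1 : g (A v₁) p = 0 := by rw [hAskew, hAp]; simp
      have e2 : g (A v₂) p = 0 := by rw [hAskew, hAp]; simp
      simp only [wedge_apply, map_sub, map_smul, e1, e2]
      module
    have key : ⁅A, Szero g p v₃ v₁ v₂⁆
        = Szero g p v₃ (A v₁) v₂ + Szero g p v₃ v₁ (A v₂) := by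
      show ⁅A, g p v₃ • wedge g p ((wedge g v₁ v₂) p)⁆ = _
      rw [lie_smul, lie_wedge g hsymm A hAskew, hAp, wedge_zero_left, zero_add, hm,
        wedge_add_right]
      show _ = g p v₃ • wedge g p ((wedge g (A v₁) v₂) p)
          + g p v₃ • wedge g p ((wedge g v₁ (A v₂)) p)
      rw [smul_add]
    have h2 : Szero g p (A v₃) v₁ v₂ = 0 := by
      show g p (A v₃) • _ = (0 : Module.End ℝ V)
      rw [h1, zero_smul]
    rw [key, h2]
    abel

theorem stmt9_part3 {V : Type*} [AddCommGroup V] [Module ℝ V] [FiniteDimensional ℝ V]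
    (g : LinearMap.BilinForm ℝ V) (hsymm : ∀ x y : V, g x y = g y x)
    (hnondeg : ∀ x : V, (∀ y : V, g x y = 0) → x = 0)
    (p q : V) (hp : g p p = 0) (hq : g q q = 0) (hpq : g p q = 1)
    (hEpos : ∀ x ∈ Esub g p q, x ≠ 0 → 0 < g x x)
    (hEne : Esub g p q ≠ ⊥)
    (hdecomp : ∀ u : V, ∃ α β : ℝ, ∃ e ∈ Esub g p q, u = α • p + e + β • q)
    (𝔥 : LieSubalgebra ℝ (Module.End ℝ V))
    (hskew : ∀ B ∈ 𝔥, ∀ x y : V, g (B x) y = - g x (B y))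
    (hBp : ∀ B ∈ 𝔥, B p = 0) (hBq : ∀ B ∈ 𝔥, B q = 0)
    (hirr : ∀ W : Submodule ℝ V, W ≤ Esub g p q →
      (∀ B ∈ 𝔥, ∀ x ∈ W, B x ∈ W) → W = ⊥ ∨ W = Esub g p q)
    (S : V → V → V → Module.End ℝ V)
    (hS : MemNablaR g p q 𝔥 S) (hAnn : Annihilated g p q 𝔥 S) :
    ∃ c : ℝ, ∀ u v w : V, S u v w = c • Szero g p u v w := by
  obtain ⟨hlin1, hlin2, hlin3, halt, hmem, hbi1, hbi2⟩ := hS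
  -- linearity helpers
  have L1 := fun v w => lin_helper (fun u => S u v w) (fun c u u' => hlin1 c u u' v w)
  have L2 := fun u w => lin_helper (fun v => S u v w) (fun c v v' => hlin2 c u v v' w)
  have L3 := fun u v => lin_helper (fun w => S u v w) (fun c w w' => hlin3 c u v w w')
  -- antisymmetry in last two slots
  have hanti : ∀ u v w, S u w v = - S u v w := by
    intro u v w
    have h1 : S u (v + w) (v + w) = 0 := halt u (v + w)
    rw [(L2 u (v+w)).2.1 v w, (L3 u v).2.1 v w, (L3 u w).2.1 v w, halt, halt] at h1
    rw [eq_neg_iff_add_eq_zero]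
    rw [zero_add, add_zero] at h1
    linear_combination (norm := abel) h1
  -- basic facts about Esub and g
  have hgp : ∀ e ∈ Esub g p q, g p e = 0 := fun e he => LinearMap.mem_ker.mp he.1
  have hgq : ∀ e ∈ Esub g p q, g q e = 0 := fun e he => LinearMap.mem_ker.mp he.2
  have hgp' : ∀ e ∈ Esub g p q, g e p = 0 := fun e he => by rw [hsymm]; exact hgp e he
  have hgq' : ∀ e ∈ Esub g p q, g e q = 0 := fun e he => by rw [hsymm]; exact hgq e he
  have hqp : g q p = 1 := by rw [hsymm]; exact hpq
  -- extension lemma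
  have hext : ∀ T : Module.End ℝ V, T p = 0 → T q = 0 →
      (∀ e ∈ Esub g p q, T e = 0) → T = 0 := by
    intro T h1 h2 h3
    ext u
    obtain ⟨α, β, e, he, rfl⟩ := hdecomp u
    simp [map_add, map_smul, h1, h2, h3 e he]
  -- E membership criterion
  have hEzero : ∀ v ∈ Esub g p q, g v v = 0 → v = 0 := by
    intro v hv hvv
    by_contra h
    exact absurd hvv (ne_of_gt (hEpos v hv h))
  -- values of S kill p
  have hSp0 : ∀ u v w, S u v w p = 0 := by
    intro u v w
    obtain ⟨B, hB, e, he, hX⟩ := hmem u v w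
    rw [hX]
    simp [LinearMap.add_apply, hBp B hB, wedge_apply, hp, hgp' e he]
  -- skewness of S values
  have hSskew : ∀ u v w x y, g (S u v w x) y = - g x (S u v w y) := by
    intro u v w x y
    obtain ⟨B, hB, e, he, hX⟩ := hmem u v w
    rw [hX]
    simp only [LinearMap.add_apply, map_add]
    rw [hskew B hB x y, wedge_skew g hsymm p e x y]
    ring
  -- Bianchi 1 paired with g
  have hbi1g : ∀ u a b c d, g (S u a b c) d + g (S u b c a) d + g (S u c a b) d = 0 := by
    intro u a b c d
    have := hbi1 u a b c
    have h2 := congrArg (fun z => g z d) this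
    simpa [map_add] using h2
  -- pair symmetry
  have hpair : ∀ u v w x y, g (S u v w x) y = g (S u x y v) w := by
    intro u v w x y
    have alt : ∀ a b c d : V, g (S u b a c) d = - g (S u a b c) d := by
      intro a b c d; rw [hanti u a b]; simp
    have skw : ∀ a b c d : V, g (S u a b d) c = - g (S u a b c) d := by
      intro a b c d; rw [hSskew u a b d c, hsymm]
    linarith [hbi1g u v w x y, hbi1g u w x y v, hbi1g u x y v w, hbi1g u y v w x,
      skw w x v y, alt x v w y, skw v x w y, skw x y w v, alt y w x v, skw w y x v,
      skw y v x w, skw v w y x, alt w x y v, alt v x y w, skw x v y w, alt y v w x,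
      skw y w v x, alt x y v w, skw x y v w, alt v w x y, skw v w x y, alt w y v x,
      skw w x y v, skw x v w y]
  -- S_u(p, ·) = 0
  have hSup0 : ∀ u w, S u p w = 0 := by
    intro u w
    ext x
    apply hnondeg
    intro y
    rw [hpair u p w x y]
    rw [hSp0 u x y]
    simp
  -- S_p = 0
  have hSpv0 : ∀ v w, S p v w = 0 := by
    intro v w
    have h := hbi2 p v w
    rw [hanti v p w, hSup0 v w, hSup0 w v, neg_zero, add_zero, add_zero] at h
    exact h
  -- wedge facts specialised
  have hAq : ∀ e ∈ Esub g p q, wedge g p e q = e := by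
    intro e he
    rw [wedge_apply, hpq, hgq' e he]; simp
  have hAp2 : ∀ e ∈ Esub g p q, wedge g p e p = 0 := by
    intro e he
    rw [wedge_apply, hp, hgp' e he]; simp
  have hAf : ∀ e ∈ Esub g p q, ∀ f ∈ Esub g p q, wedge g p e f = -(g e f) • p := by
    intro e he f hf
    rw [wedge_apply, hgp f hf]; simp
  have hA_InG : ∀ e ∈ Esub g p q, InGAlg g p q 𝔥 (wedge g p e) :=
    fun e he => ⟨0, 𝔥.zero_mem, e, he, by rw [zero_add]⟩
  -- rearranged annihilation equation
  have hAnnEq : ∀ A, InGAlg g p q 𝔥 A → ∀ v₁ v₂ v₃,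
      ⁅A, S v₃ v₁ v₂⁆ = S (A v₃) v₁ v₂ + S v₃ (A v₁) v₂ + S v₃ v₁ (A v₂) := by
    intro A hA v₁ v₂ v₃
    have h := hAnn A hA v₁ v₂ v₃
    have h2 : ⁅A, S v₃ v₁ v₂⁆
        - (S (A v₃) v₁ v₂ + S v₃ (A v₁) v₂ + S v₃ v₁ (A v₂)) = 0 := by
      rw [← h]; abel
    exact sub_eq_zero.mp h2
  -- q-values of S lie in E
  have hSq_mem : ∀ u v w, S u v w q ∈ Esub g p q := by
    intro u v w
    obtain ⟨B, hB, e, he, hX⟩ := hmem u v w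
    have : S u v w q = e := by
      rw [hX, LinearMap.add_apply, hBq B hB, hAq e he, zero_add]
    rw [this]; exact he
  -- reconstruction lemma
  have hrecon : ∀ u v w, (∀ e ∈ Esub g p q, S u v w e = -(g e (S u v w q)) • p) →
      S u v w = wedge g p (S u v w q) := by
    intro u v w h
    have hXq := hSq_mem u v w
    have h0 : S u v w - wedge g p (S u v w q) = 0 := by
      apply hext
      · rw [LinearMap.sub_apply, hSp0, hAp2 _ hXq, sub_zero]
      · rw [LinearMap.sub_apply, hAq _ hXq, sub_self]
      · intro e he
        rw [LinearMap.sub_apply, h e he, hAf _ hXq e he, hsymm e]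
        simp
    exact sub_eq_zero.mp h0
  -- general second-Bianchi rearrangement
  have hqef : ∀ a b : V, S q a b = S a q b - S b q a := by
    intro a b
    have h := hbi2 q a b
    rw [hanti a q b] at h
    have h2 : S q a b - (S a q b - S b q a) = 0 := by rw [← h]; abel
    exact sub_eq_zero.mp h2
  -- 𝔥 maps E to E
  have hBE : ∀ B ∈ 𝔥, ∀ f ∈ Esub g p q, B f ∈ Esub g p q := by
    intro B hB f hf
    constructor
    · refine LinearMap.mem_ker.mpr ?_
      rw [hsymm, hskew B hB f p, hBp B hB]
      simp
    · refine LinearMap.mem_ker.mpr ?_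
      rw [hsymm, hskew B hB f q, hBq B hB]
      simp
  -- beta-reduced linearity helpers
  have Szero1 : ∀ v w, S 0 v w = 0 := fun v w => (L1 v w).1
  have Sadd1 : ∀ u u' v w, S (u + u') v w = S u v w + S u' v w :=
    fun u u' v w => (L1 v w).2.1 u u'
  have Ssmul1 : ∀ (c : ℝ) u v w, S (c • u) v w = c • S u v w :=
    fun c u v w => (L1 v w).2.2 c u
  have Szero2 : ∀ u w, S u 0 w = 0 := fun u w => (L2 u w).1
  have Sadd2 : ∀ u v v' w, S u (v + v') w = S u v w + S u v' w :=
    fun u v v' w => (L2 u w).2.1 v v'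
  have Ssmul2 : ∀ (c : ℝ) u v w, S u (c • v) w = c • S u v w :=
    fun c u v w => (L2 u w).2.2 c v
  have Szero3 : ∀ u v, S u v 0 = 0 := fun u v => (L3 u v).1
  have Sadd3 : ∀ u v w w', S u v (w + w') = S u v w + S u v w' :=
    fun u v w w' => (L3 u v).2.1 w w'
  have Ssmul3 : ∀ (c : ℝ) u v w, S u v (c • w) = c • S u v w :=
    fun c u v w => (L3 u v).2.2 c w
  -- the 𝔥-component of S-values
  have hDmem : ∀ u v w, S u v w - wedge g p (S u v w q) ∈ 𝔥 := by
    intro u v w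
    obtain ⟨B, hB, e, he, hX⟩ := hmem u v w
    have hq' : S u v w q = e := by
      rw [hX, LinearMap.add_apply, hBq B hB, hAq e he, zero_add]
    rw [hq', hX, add_sub_cancel_right]
    exact hB
  -- step (a)
  have step_a : ∀ f₁ ∈ Esub g p q, ∀ f₂ ∈ Esub g p q, ∀ f₃ ∈ Esub g p q,
      S f₃ f₁ f₂ = wedge g p (S f₃ f₁ f₂ q) := by
    intro f₁ h1 f₂ h2 f₃ h3
    apply hrecon
    intro e he
    have hEq := hAnnEq (wedge g p e) (hA_InG e he) f₁ f₂ f₃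
    rw [hAf e he f₃ h3, hAf e he f₁ h1, hAf e he f₂ h2, Ssmul1, Ssmul2, Ssmul3,
      hSpv0, hSup0, hanti f₃ p f₁, hSup0] at hEq
    simp only [smul_zero, add_zero, zero_add, neg_zero, smul_neg] at hEq
    have hq' := DFunLike.congr_fun hEq q
    rw [end_lie_apply, hAq e he, hAf e he _ (hSq_mem f₃ f₁ f₂)] at hq'
    simp only [LinearMap.zero_apply] at hq'
    exact (sub_eq_zero.mp hq').symm
  -- Eq1 : the (q,q,f) annihilation equation
  have hEq1 : ∀ e ∈ Esub g p q, ∀ f ∈ Esub g p q,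
      ⁅wedge g p e, S q q f⁆ = S e q f + S q e f := by
    intro e he f hf
    have hEq := hAnnEq (wedge g p e) (hA_InG e he) q f q
    rw [hAq e he, hAf e he f hf, Ssmul3, hanti q p q, hSup0] at hEq
    simp only [neg_zero, smul_zero, add_zero] at hEq
    exact hEq
  -- key scalar identity from Eq1 applied at f''
  have happ : ∀ e ∈ Esub g p q, ∀ f ∈ Esub g p q, ∀ f'' ∈ Esub g p q,
      S e q f f'' + S q e f f'' = -(g e (S q q f f'')) • p := by
    intro e he f hf f'' hf''
    have lhs := DFunLike.congr_fun (hEq1 e he f hf) f''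
    rw [end_lie_apply, hAf e he f'' hf''] at lhs
    simp only [map_smul, map_neg, hSp0, smul_zero, neg_zero, sub_zero] at lhs
    rw [wedge_apply] at lhs
    have hgp0 : g p (S q q f f'') = 0 := by
      rw [hsymm, hSskew q q f f'' p, hSp0]
      simp
    rw [hgp0, zero_smul, zero_sub, ← neg_smul] at lhs
    exact lhs.symm
  -- step (d): sum of the two 𝔥-components vanishes
  have hDsum : ∀ e ∈ Esub g p q, ∀ f ∈ Esub g p q,
      (S e q f - wedge g p (S e q f q)) + (S q e f - wedge g p (S q e f q)) = 0 := by
    intro e he f hf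
    apply hext
    · rw [LinearMap.add_apply, LinearMap.sub_apply, LinearMap.sub_apply,
        hSp0, hSp0, hAp2 _ (hSq_mem e q f), hAp2 _ (hSq_mem q e f)]
      simp
    · rw [LinearMap.add_apply, LinearMap.sub_apply, LinearMap.sub_apply,
        hAq _ (hSq_mem e q f), hAq _ (hSq_mem q e f)]
      simp
    · intro f'' hf''
      have h3 : ((S e q f - wedge g p (S e q f q)) + (S q e f - wedge g p (S q e f q))) f''
          = (-(g e (S q q f f'')) + (g (S e q f q) f'' + g (S q e f q) f'')) • p := by
        rw [LinearMap.add_apply, LinearMap.sub_apply, LinearMap.sub_apply,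
          hAf _ (hSq_mem e q f) f'' hf'', hAf _ (hSq_mem q e f) f'' hf'']
        rw [show S e q f f'' = -(g e (S q q f f'')) • p - S q e f f'' from by
          rw [← happ e he f hf f'' hf'']; abel]
        module
      have hmemT : ((S e q f - wedge g p (S e q f q))
          + (S q e f - wedge g p (S q e f q))) f'' ∈ Esub g p q := by
        rw [LinearMap.add_apply]
        exact (Esub g p q).add_mem (hBE _ (hDmem e q f) f'' hf'')
          (hBE _ (hDmem q e f) f'' hf'')
      have hz : g q (((S e q f - wedge g p (S e q f q))
          + (S q e f - wedge g p (S q e f q))) f'') = 0 := hgq _ hmemT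
      rw [h3, map_smul, smul_eq_mul, hqp, mul_one] at hz
      rw [h3, hz, zero_smul]
  -- step (e)
  have hD2 : ∀ a b : V, S q a b - wedge g p (S q a b q)
      = (S a q b - wedge g p (S a q b q)) - (S b q a - wedge g p (S b q a q)) := by
    intro a b
    rw [hqef a b, LinearMap.sub_apply, wedge_sub_right]
    abel
  have hD1zero : ∀ e ∈ Esub g p q, ∀ f ∈ Esub g p q,
      S e q f = wedge g p (S e q f q) := by
    intro e he f hf
    have h1 := hDsum e he f hf
    have h1' := hDsum f hf e he
    rw [hD2 e f] at h1
    rw [hD2 f e] at h1'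
    set X := S e q f - wedge g p (S e q f q) with hXdef
    set Y := S f q e - wedge g p (S f q e q) with hYdef
    have hY : Y = X + X := by
      have hz : Y - (X + X) = -(X + (X - Y)) := by abel
      rw [h1, neg_zero] at hz
      exact sub_eq_zero.mp hz
    have h6 : X + X + X = 0 := by
      rw [hY] at h1'
      rw [← h1']; abel
    have h7 : (3 : ℝ) • X = 0 := by
      rw [show (3 : ℝ) • X = X + X + X from by module, h6]
    have h8 := smul_eq_zero.mp h7
    rcases h8 with h8 | h8
    · norm_num at h8
    · exact sub_eq_zero.mp h8
  have hSqef_dec : ∀ e ∈ Esub g p q, ∀ f ∈ Esub g p q,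
      S q e f = wedge g p (S q e f q) := by
    intro e he f hf
    have hX0 : S e q f - wedge g p (S e q f q) = 0 :=
      sub_eq_zero.mpr (hD1zero e he f hf)
    have h1 := hDsum e he f hf
    rw [hX0, zero_add] at h1
    exact sub_eq_zero.mp h1
  -- step (f)
  have hSeff : ∀ e ∈ Esub g p q, ∀ f₁ ∈ Esub g p q, ∀ f₂ ∈ Esub g p q,
      S e f₁ f₂ = 0 := by
    intro e he f₁ h1 f₂ h2
    have hdec := step_a f₁ h1 f₂ h2 e he
    suffices hz : S e f₁ f₂ q = 0 by rw [hdec, hz, wedge_zero_right]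
    have hEq := hAnnEq (wedge g p e) (hA_InG e he) f₁ f₂ q
    rw [hAq e he, hAf e he f₁ h1, hAf e he f₂ h2, Ssmul2, Ssmul3,
      hSup0, hanti q p f₁, hSup0] at hEq
    simp only [smul_zero, neg_zero, smul_neg, add_zero] at hEq
    have hqv := DFunLike.congr_fun hEq q
    rw [end_lie_apply, hAq e he, hAf e he _ (hSq_mem q f₁ f₂)] at hqv
    have hXe : S q f₁ f₂ e = -(g (S q f₁ f₂ q) e) • p := by
      conv_lhs => rw [hSqef_dec f₁ h1 f₂ h2]
      rw [hAf _ (hSq_mem q f₁ f₂) e he]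
    rw [hXe, hsymm e (S q f₁ f₂ q)] at hqv
    rw [← hqv]
    abel
  -- pairing version of hqef
  have hqefq : ∀ a b y : V, g (S q a b q) y = g (S a q b q) y - g (S b q a q) y := by
    intro a b y
    have h := DFunLike.congr_fun (hqef a b) q
    rw [LinearMap.sub_apply] at h
    rw [h, map_sub, LinearMap.sub_apply]
  -- scalar relations
  have hT2 : ∀ e ∈ Esub g p q, ∀ f ∈ Esub g p q, ∀ f'' ∈ Esub g p q,
      g (S q q f e) f'' = -(2 * g (S e q f q) f'') + g (S f q e q) f'' := by
    intro e he f hf f'' hf''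
    have h := congrArg (fun z => g z q) (happ e he f hf f'' hf'')
    simp only [map_add, map_smul, map_neg, LinearMap.add_apply, LinearMap.smul_apply,
      LinearMap.neg_apply, smul_eq_mul, hpq, mul_one] at h
    rw [hSskew e q f f'' q, hSskew q e f f'' q,
      hsymm f'' (S e q f q), hsymm f'' (S q e f q)] at h
    have h2 := hSskew q q f e f''
    have h3 := hqefq e f f''
    have h4 := hsymm e (S q q f f'')
    linarith
  have hS2' : ∀ f e f'' : V, g (S q q f e) f'' = -(g (S q q f f'') e) := by
    intro f e f''
    rw [hSskew q q f e f'', hsymm e (S q q f f'')]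
  have hS3' : ∀ f e f'' : V,
      g (S q q f e) f'' = g (S e q f'' q) f - g (S f'' q e q) f := by
    intro f e f''
    rw [hpair q q f e f'', hqefq e f'' f]
  have hT1 : ∀ a b c : V, g (S a q b q) c = g (S a q c q) b :=
    fun a b c => hpair a q b q c
  -- τ = 0
  have hτ0 : ∀ e ∈ Esub g p q, ∀ f ∈ Esub g p q, ∀ f' ∈ Esub g p q,
      g (S e q f q) f' = 0 := by
    intro e he f hf f' hf'
    linarith [hT2 e he f hf f' hf', hT2 f' hf' f hf e he, hT2 f hf e he f' hf',
      hT2 f' hf' e he f hf, hT2 e he f' hf' f hf, hT2 f hf f' hf' e he,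
      hS2' f e f', hS2' e f f', hS2' f' e f, hS2' f f' e, hS2' e f' f, hS2' f' f e,
      hS3' f e f', hS3' e f f', hS3' f' e f, hS3' f f' e, hS3' e f' f, hS3' f' f e,
      hT1 e f f', hT1 f e f', hT1 f' e f]
  have hψ0 : ∀ e ∈ Esub g p q, ∀ f ∈ Esub g p q, S e q f q = 0 := by
    intro e he f hf
    exact hEzero _ (hSq_mem e q f) (hτ0 e he f hf _ (hSq_mem e q f))
  have hSeqf0 : ∀ e ∈ Esub g p q, ∀ f ∈ Esub g p q, S e q f = 0 := by
    intro e he f hf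
    rw [hD1zero e he f hf, hψ0 e he f hf, wedge_zero_right]
  have hSqef0 : ∀ e ∈ Esub g p q, ∀ f ∈ Esub g p q, S q e f = 0 := by
    intro e he f hf
    rw [hqef e f, hSeqf0 e he f hf, hSeqf0 f hf e he, sub_zero]
  -- step (h)
  have hqq : ∀ f ∈ Esub g p q, S q q f = wedge g p (S q q f q) := by
    intro f hf
    apply hrecon
    intro e he
    have hEq := hEq1 e he f hf
    rw [hSeqf0 e he f hf, hSqef0 e he f hf, add_zero] at hEq
    have h := DFunLike.congr_fun hEq q
    rw [end_lie_apply, hAq e he, hAf e he _ (hSq_mem q q f)] at h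
    simp only [LinearMap.zero_apply] at h
    exact (sub_eq_zero.mp h).symm
  -- equivariance under 𝔥
  have hequiv : ∀ B ∈ 𝔥, ∀ f : V, B (S q q f q) = S q q (B f) q := by
    intro B hB f
    have hIn : InGAlg g p q 𝔥 B :=
      ⟨B, hB, 0, (Esub g p q).zero_mem, by rw [wedge_zero_right, add_zero]⟩
    have hEq := hAnnEq B hIn q f q
    rw [hBq B hB, Szero1, Szero2, zero_add, zero_add] at hEq
    have h := DFunLike.congr_fun hEq q
    rw [end_lie_apply, hBq B hB] at h
    simp only [map_zero, sub_zero] at h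
    exact h
  -- the symmetric operator on E
  haveI : Nontrivial ↥(Esub g p q) := Submodule.nontrivial_iff_ne_bot.mpr hEne
  obtain ⟨φE, hφE⟩ : ∃ φE : ↥(Esub g p q) →ₗ[ℝ] ↥(Esub g p q),
      ∀ z : ↥(Esub g p q), (φE z : V) = S q q (↑z) q := by
    refine ⟨{ toFun := fun z => ⟨S q q (↑z) q, hSq_mem q q ↑z⟩,
              map_add' := ?_, map_smul' := ?_ }, fun z => rfl⟩
    · intro a b
      apply Subtype.ext
      simp only [Submodule.coe_add]
      rw [Sadd3, LinearMap.add_apply]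
    · intro c a
      apply Subtype.ext
      simp only [Submodule.coe_smul, RingHom.id_apply]
      rw [Ssmul3, LinearMap.smul_apply]
  obtain ⟨bE, hbE⟩ : ∃ bE : LinearMap.BilinForm ℝ ↥(Esub g p q),
      ∀ a b : ↥(Esub g p q), bE a b = g ↑a ↑b :=
    ⟨g.compl₁₂ (Esub g p q).subtype (Esub g p q).subtype, fun a b => rfl⟩
  obtain ⟨μ, x, hx0, hxe⟩ := exists_sym_eigenvector bE
    (fun a b => by rw [hbE, hbE, hsymm])
    (fun a ha => by
      rw [hbE]
      exact hEpos ↑a a.2 (fun h => ha (Subtype.ext h)))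
    φE
    (fun a b => by
      rw [hbE, hbE, hφE, hφE, hsymm (↑a : V) (S q q (↑b) q)]
      exact hpair q q (↑a) q (↑b))
  -- eigen property transported to V
  have hKval : ∀ z : ↥(Esub g p q), φE z = μ • z → S q q (↑z) q = μ • (↑z : V) := by
    intro z hz
    have h := congrArg Subtype.val hz
    rw [hφE z] at h
    rw [h, Submodule.coe_smul]
  -- the eigenspace, pushed into V
  set K := LinearMap.ker (φE - μ • LinearMap.id) with hKdef
  have hKmem : ∀ z : ↥(Esub g p q), z ∈ K ↔ φE z = μ • z := by
    intro z
    rw [hKdef, LinearMap.mem_ker, LinearMap.sub_apply, LinearMap.smul_apply,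
      LinearMap.id_apply, sub_eq_zero]
  have hWle : Submodule.map (Esub g p q).subtype K ≤ Esub g p q :=
    Submodule.map_subtype_le _ _
  have hWinv : ∀ B ∈ 𝔥, ∀ y ∈ Submodule.map (Esub g p q).subtype K,
      B y ∈ Submodule.map (Esub g p q).subtype K := by
    intro B hB y hy
    obtain ⟨z, hz, rfl⟩ := hy
    have hz' : S q q (↑z) q = μ • ((Esub g p q).subtype z : V) := hKval z ((hKmem z).mp hz)
    refine ⟨⟨B ↑z, hBE B hB _ z.2⟩, (hKmem _).mpr ?_, rfl⟩
    apply Subtype.ext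
    rw [hφE]
    simp only [Submodule.coe_smul]
    show S q q (B ↑z) q = μ • B ((Esub g p q).subtype z : V)
    rw [← hequiv B hB, hz', map_smul]
  have hWne : Submodule.map (Esub g p q).subtype K ≠ ⊥ := by
    rw [Submodule.ne_bot_iff]
    refine ⟨↑x, ⟨x, (hKmem x).mpr hxe, rfl⟩, ?_⟩
    intro h
    exact hx0 (Subtype.ext h)
  rcases hirr _ hWle hWinv with hW | hW
  · exact absurd hW hWne
  have heig : ∀ f ∈ Esub g p q, S q q f q = μ • f := by
    intro f hf
    have hfW : f ∈ Submodule.map (Esub g p q).subtype K := hW.symm ▸ hf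
    obtain ⟨z, hz, rfl⟩ := hfW
    exact hKval z ((hKmem z).mp hz)
  have hSqq' : ∀ f ∈ Esub g p q, S q q f = μ • wedge g p f := by
    intro f hf
    rw [hqq f hf, heig f hf, wedge_smul_right]
  -- final assembly
  refine ⟨μ, ?_⟩
  have hSE0 : ∀ e ∈ Esub g p q, ∀ v w : V, S e v w = 0 := by
    intro e he v w
    obtain ⟨α₂, β₂, e₂, he₂, rfl⟩ := hdecomp v
    obtain ⟨α₃, β₃, e₃, he₃, rfl⟩ := hdecomp w
    have z1 : S e e₂ p = 0 := by rw [hanti e p e₂, hSup0, neg_zero]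
    have z2 : S e e₂ q = 0 := by rw [hanti e q e₂, hSeqf0 e he e₂ he₂, neg_zero]
    have z3 : S e q p = 0 := by rw [hanti e p q, hSup0, neg_zero]
    simp only [Sadd2, Ssmul2, Sadd3, Ssmul3, hSup0, z1, z2, z3,
      hSeff e he e₂ he₂ e₃ he₃, hSeqf0 e he e₃ he₃, halt, smul_zero, add_zero, zero_add]
  -- values of S q
  intro u v w
  obtain ⟨α₁, β₁, e₁, he₁, rfl⟩ := hdecomp u
  obtain ⟨α₂, β₂, e₂, he₂, rfl⟩ := hdecomp v
  obtain ⟨α₃, β₃, e₃, he₃, rfl⟩ := hdecomp w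
  have y1 : S q e₂ p = 0 := by rw [hanti q p e₂, hSup0, neg_zero]
  have y2 : S q e₂ q = -(μ • wedge g p e₂) := by
    rw [hanti q q e₂, hSqq' e₂ he₂]
  have y3 : S q q p = 0 := by rw [hanti q p q, hSup0, neg_zero]
  have hSq : S q (α₂ • p + e₂ + β₂ • q) (α₃ • p + e₃ + β₃ • q)
      = β₂ • (μ • wedge g p e₃) + β₃ • (-(μ • wedge g p e₂)) := by
    simp only [Sadd2, Ssmul2, Sadd3, Ssmul3, hSup0, y1, y2, y3,
      hSqef0 e₂ he₂ e₃ he₃, hSqq' e₃ he₃, halt, smul_zero, add_zero, zero_add,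
      smul_neg]
    abel
  have hLHS : S (α₁ • p + e₁ + β₁ • q) (α₂ • p + e₂ + β₂ • q) (α₃ • p + e₃ + β₃ • q)
      = β₁ • (β₂ • (μ • wedge g p e₃) + β₃ • (-(μ • wedge g p e₂))) := by
    rw [Sadd1, Sadd1, Ssmul1, Ssmul1, hSpv0, hSE0 e₁ he₁, hSq]
    simp
  rw [hLHS]
  -- compute Szero
  have hgpu : g p (α₁ • p + e₁ + β₁ • q) = β₁ := by
    simp [map_add, map_smul, hp, hpq, hgp e₁ he₁, smul_eq_mul]
  have hgvp : g (α₂ • p + e₂ + β₂ • q) p = β₂ := by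
    simp [map_add, map_smul, LinearMap.add_apply, LinearMap.smul_apply, hp, hqp,
      hgp' e₂ he₂, smul_eq_mul]
  have hgwp : g (α₃ • p + e₃ + β₃ • q) p = β₃ := by
    simp [map_add, map_smul, LinearMap.add_apply, LinearMap.smul_apply, hp, hqp,
      hgp' e₃ he₃, smul_eq_mul]
  have hSz : Szero g p (α₁ • p + e₁ + β₁ • q) (α₂ • p + e₂ + β₂ • q)
        (α₃ • p + e₃ + β₃ • q)
      = β₁ • (β₂ • (wedge g p e₃ + β₃ • wedge g p q)
        - β₃ • (wedge g p e₂ + β₂ • wedge g p q)) := by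
    show g p (α₁ • p + e₁ + β₁ • q)
        • wedge g p ((wedge g (α₂ • p + e₂ + β₂ • q) (α₃ • p + e₃ + β₃ • q)) p) = _
    rw [hgpu, wedge_apply, hgvp, hgwp]
    rw [wedge_sub_right, wedge_smul_right, wedge_smul_right]
    rw [wedge_add_right, wedge_add_right, wedge_smul_right, wedge_smul_right,
      wedge_add_right, wedge_add_right, wedge_smul_right, wedge_smul_right,
      wedge_self]
    simp only [smul_zero, zero_add]
  rw [hSz]
  module

theorem stmt9_part2 {V : Type*} [AddCommGroup V] [Module ℝ V]
    (g : LinearMap.BilinForm ℝ V) (hsymm : ∀ x y : V, g x y = g y x)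
    (p q : V) (hpq : g p q = 1)
    (hEne : Esub g p q ≠ ⊥) :
    Szero g p ≠ (0 : V → V → V → Module.End ℝ V) := by
  obtain ⟨f, hf, hf0⟩ := (Submodule.ne_bot_iff _).mp hEne
  have hqp : g q p = 1 := by rw [hsymm]; exact hpq
  have hfp : g f p = 0 := by rw [hsymm]; exact LinearMap.mem_ker.mp hf.1
  have hfq : g f q = 0 := by rw [hsymm]; exact LinearMap.mem_ker.mp hf.2
  intro h
  have h1 := congrFun (congrFun (congrFun h q) q) f
  have h2 : Szero g p q q f q = f := by
    show (g p q • wedge g p ((wedge g q f) p)) q = f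
    rw [wedge_apply g q f p, hqp, hfp, zero_smul, one_smul, sub_zero,
      hpq, one_smul, wedge_apply, hpq, hfq, one_smul, zero_smul, sub_zero]
  rw [h1] at h2
  exact hf0 h2.symm

/-- For `𝔤 = 𝔥 ⊕ (p∧E)` with `𝔥 ⊆ so(E)` irreducible, the subspace
of `∇R(𝔤)` consisting of tensors annihilated by `𝔤` is one-dimensional, spanned
by `S = q' ⊗ R^{Id_E}`. -/
theorem stmt_9 {V : Type*} [AddCommGroup V] [Module ℝ V] [FiniteDimensional ℝ V]
    (g : LinearMap.BilinForm ℝ V) (hsymm : ∀ x y : V, g x y = g y x)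
    (hnondeg : ∀ x : V, (∀ y : V, g x y = 0) → x = 0)
    (p q : V) (hp : g p p = 0) (hq : g q q = 0) (hpq : g p q = 1)
    (hEpos : ∀ x ∈ Esub g p q, x ≠ 0 → 0 < g x x)
    (hEne : Esub g p q ≠ ⊥)
    (hdecomp : ∀ u : V, ∃ α β : ℝ, ∃ e ∈ Esub g p q, u = α • p + e + β • q)
    (𝔥 : LieSubalgebra ℝ (Module.End ℝ V))
    (hskew : ∀ B ∈ 𝔥, ∀ x y : V, g (B x) y = - g x (B y))
    (hBp : ∀ B ∈ 𝔥, B p = 0) (hBq : ∀ B ∈ 𝔥, B q = 0)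
    (hirr : ∀ W : Submodule ℝ V, W ≤ Esub g p q →
      (∀ B ∈ 𝔥, ∀ x ∈ W, B x ∈ W) → W = ⊥ ∨ W = Esub g p q) :
    (MemNablaR g p q 𝔥 (Szero g p) ∧ Annihilated g p q 𝔥 (Szero g p)) ∧
    Szero g p ≠ 0 ∧
    (∀ S : V → V → V → Module.End ℝ V,
      MemNablaR g p q 𝔥 S → Annihilated g p q 𝔥 S →
      ∃ c : ℝ, ∀ u v w : V, S u v w = c • Szero g p u v w) := by
  refine ⟨stmt9_part1 g hsymm p q hp hpq hdecomp 𝔥 hskew hBp hBq,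
    stmt9_part2 g hsymm p q hpq hEne,
    fun S hS hAnn => stmt9_part3 g hsymm hnondeg p q hp hq hpq hEpos hEne hdecomp
      𝔥 hskew hBp hBq hirr S hS hAnn⟩
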